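/- arXiv:1501.05806 — 2 statements merged into one kernel-verified Lean document; each statement's English description precedes it below -/
import Mathlib

section
/- Let n ≥ 3, let J_n ∈ M_n(ℂ) be the nilpotent Jordan block, and let B_n = E_{n−1,1} − E_{n,2} ∈ M_n(ℂ). Then the ℂ-linear span of all products of between 1 and 2n − 2 elements of {J_n, B_n} is all of M_n(ℂ). Combined with the fact that products of length at most 2n − 3 do not suffice, this says l_0({J_n, B_n}) = 2n − 2. -/
/-! Multiplying by powers of the Jordan block shifts matrix units, `J^a E_{i,j} J^b = E_{i-a,j+b}`
(or `0` once an index leaves the range). The word `B J^{n-3} B = -E_{n,1}` has length `n - 1`,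
and shifting it reaches every `E_{i,j}` with `j ≤ i` within length `2n - 2`. Above the diagonal,
the single-`B` words `J^a B J^b` of length `n - 1 + d` are the differences
`E_{i,i+d} - E_{i+1,i+1+d}`, which telescope along the `d`-th superdiagonal down to an entry
that has fallen off the matrix. -/

/-- The `n × n` nilpotent Jordan block over `ℂ`. -/
def jordan (n : ℕ) : Matrix (Fin n) (Fin n) ℂ :=
  Matrix.of fun a b => if (a : ℕ) + 1 = (b : ℕ) then 1 else 0

/-- `L_k^0(S)`: the ℂ-linear span of all words in `S` of length between `1` and `k`. -/
noncomputable def wordSpan0 (n k : ℕ) (S : Set (Matrix (Fin n) (Fin n) ℂ)) :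
    Submodule ℂ (Matrix (Fin n) (Fin n) ℂ) :=
  Submodule.span ℂ {M | ∃ w : List (Matrix (Fin n) (Fin n) ℂ),
    1 ≤ w.length ∧ w.length ≤ k ∧ (∀ x ∈ w, x ∈ S) ∧ M = w.prod}

section WordSpan

variable {n k m : ℕ} {S : Set (Matrix (Fin n) (Fin n) ℂ)} {s x y : Matrix (Fin n) (Fin n) ℂ}

lemma wordSpan0_mono (h : k ≤ m) : wordSpan0 n k S ≤ wordSpan0 n m S :=
  Submodule.span_mono fun _ ⟨w, h1, hk, hS, hM⟩ => ⟨w, h1, hk.trans h, hS, hM⟩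

lemma mem_wordSpan0_of_mem (hs : s ∈ S) (hk : 1 ≤ k) : s ∈ wordSpan0 n k S :=
  Submodule.subset_span ⟨[s], le_rfl, hk, by simpa using hs, by simp⟩

lemma mul_mem_wordSpan0 (hx : x ∈ wordSpan0 n k S) (hy : y ∈ wordSpan0 n m S) :
    x * y ∈ wordSpan0 n (k + m) S := by
  have : wordSpan0 n k S * wordSpan0 n m S ≤ wordSpan0 n (k + m) S := by
    rw [wordSpan0, wordSpan0, Submodule.span_mul_span]
    refine Submodule.span_mono ?_
    rintro _ ⟨_, ⟨u, hu1, huk, huS, rfl⟩, _, ⟨v, hv1, hvm, hvS, rfl⟩, rfl⟩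
    refine ⟨u ++ v, ?_, ?_, ?_, List.prod_append.symm⟩
    · simp only [List.length_append]; omega
    · simp only [List.length_append]; omega
    · simpa only [List.mem_append] using fun z hz => hz.elim (huS z) (hvS z)
  exact this (Submodule.mul_mem_mul hx hy)

lemma pow_mul_mem_wordSpan0 (hs : s ∈ S) (hx : x ∈ wordSpan0 n k S) (a : ℕ) :
    s ^ a * x ∈ wordSpan0 n (a + k) S := by
  induction a with
  | zero => simpa using hx
  | succ a ih =>
    rw [pow_succ', mul_assoc, show a + 1 + k = 1 + (a + k) by omega]
    exact mul_mem_wordSpan0 (mem_wordSpan0_of_mem hs le_rfl) ih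

lemma mul_pow_mem_wordSpan0 (hs : s ∈ S) (hx : x ∈ wordSpan0 n k S) (b : ℕ) :
    x * s ^ b ∈ wordSpan0 n (k + b) S := by
  induction b with
  | zero => simpa using hx
  | succ b ih =>
    rw [pow_succ, ← mul_assoc, ← add_assoc]
    exact mul_mem_wordSpan0 ih (mem_wordSpan0_of_mem hs le_rfl)

end WordSpan

/-- The matrix unit at a position given by natural numbers (0-based), and `0` when that position
lies outside the matrix. -/
def natSingle (n i j : ℕ) : Matrix (Fin n) (Fin n) ℂ :=
  Matrix.of fun p q => if (p : ℕ) = i ∧ (q : ℕ) = j then 1 else 0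

section NatSingle

variable {n : ℕ}

lemma natSingle_eq_single (p q : Fin n) : natSingle n p q = Matrix.single p q 1 := by
  ext a b
  simp [natSingle, Matrix.single_apply, Fin.ext_iff, eq_comm]

lemma natSingle_of_le_right {i j : ℕ} (h : n ≤ j) : natSingle n i j = 0 := by
  ext a b
  simp only [natSingle, Matrix.of_apply, Matrix.zero_apply]
  exact if_neg fun hab => by omega

lemma natSingle_mul_natSingle {i j l : ℕ} (hj : j < n) :
    natSingle n i j * natSingle n j l = natSingle n i l := by
  ext a b
  simp only [natSingle, Matrix.mul_apply, Matrix.of_apply]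
  rw [Finset.sum_eq_single ⟨j, hj⟩ (fun c _ hc => by simp [Fin.ext_iff] at hc; simp [hc])
    (by simp)]
  by_cases ha : (a : ℕ) = i <;> simp [ha]

lemma natSingle_mul_natSingle_of_ne {i j k l : ℕ} (h : j ≠ k) :
    natSingle n i j * natSingle n k l = 0 := by
  ext a b
  simp only [natSingle, Matrix.mul_apply, Matrix.of_apply, Matrix.zero_apply]
  exact Finset.sum_eq_zero fun c _ => by split_ifs <;> first | omega | simp

lemma natSingle_mul_jordan (i j : ℕ) : natSingle n i j * jordan n = natSingle n i (j + 1) := by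
  rcases lt_or_ge j n with hj | hj
  · ext a b
    simp only [natSingle, jordan, Matrix.mul_apply, Matrix.of_apply]
    rw [Finset.sum_eq_single ⟨j, hj⟩ (fun c _ hc => by simp [Fin.ext_iff] at hc; simp [hc])
      (by simp)]
    by_cases ha : (a : ℕ) = i <;> simp [ha, eq_comm]
  · rw [natSingle_of_le_right hj, Matrix.zero_mul, natSingle_of_le_right (by omega)]

lemma jordan_mul_natSingle {i : ℕ} (hi : i + 1 < n) (j : ℕ) :
    jordan n * natSingle n (i + 1) j = natSingle n i j := by
  ext a b
  simp only [natSingle, jordan, Matrix.mul_apply, Matrix.of_apply]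
  rw [Finset.sum_eq_single ⟨i + 1, hi⟩ (fun c _ hc => by simp [Fin.ext_iff] at hc; simp [hc])
    (by simp)]
  by_cases hb : (b : ℕ) = j <;> simp [hb]

lemma natSingle_mul_jordan_pow (i j b : ℕ) :
    natSingle n i j * jordan n ^ b = natSingle n i (j + b) := by
  induction b with
  | zero => simp
  | succ b ih => rw [pow_succ, ← mul_assoc, ih, natSingle_mul_jordan, add_assoc]

lemma jordan_pow_mul_natSingle {i a k : ℕ} (h : i + a = k) (hk : k < n) (j : ℕ) :
    jordan n ^ a * natSingle n k j = natSingle n i j := by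
  subst h
  induction a with
  | zero => simp
  | succ a ih =>
    rw [pow_succ, mul_assoc, ← add_assoc, jordan_mul_natSingle (i := i + a) hk, ih (by omega)]

end NatSingle

/-- `B_n = E_{n-1,1} - E_{n,2}` in 0-based indices. -/
def matB (n : ℕ) : Matrix (Fin n) (Fin n) ℂ :=
  natSingle n (n - 2) 0 - natSingle n (n - 1) 1

lemma jordan_pow_mul_matB_mul_jordan_pow {n i a : ℕ} (h : i + a + 2 = n) (b : ℕ) :
    jordan n ^ a * matB n * jordan n ^ b = natSingle n i b - natSingle n (i + 1) (b + 1) := by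
  rw [matB, mul_sub, sub_mul, jordan_pow_mul_natSingle (i := i) (by omega) (by omega),
    jordan_pow_mul_natSingle (i := i + 1) (by omega) (by omega), natSingle_mul_jordan_pow,
    natSingle_mul_jordan_pow, zero_add, add_comm 1]

lemma matB_mul_jordan_pow_mul_matB {n : ℕ} (hn : 3 ≤ n) :
    matB n * jordan n ^ (n - 3) * matB n = -natSingle n (n - 1) 0 := by
  obtain ⟨m, rfl⟩ : ∃ m, n = m + 3 := ⟨n - 3, by omega⟩
  have h₁ : natSingle (m + 3) (m + 1) m * natSingle (m + 3) (m + 1) 0 = 0 :=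
    natSingle_mul_natSingle_of_ne (by omega)
  have h₂ : natSingle (m + 3) (m + 1) m * natSingle (m + 3) (m + 2) 1 = 0 :=
    natSingle_mul_natSingle_of_ne (by omega)
  have h₃ : natSingle (m + 3) (m + 2) (m + 1) * natSingle (m + 3) (m + 1) 0 =
      natSingle (m + 3) (m + 2) 0 :=
    natSingle_mul_natSingle (by omega)
  have h₄ : natSingle (m + 3) (m + 2) (m + 1) * natSingle (m + 3) (m + 2) 1 = 0 :=
    natSingle_mul_natSingle_of_ne (by omega)
  simp only [matB, show m + 3 - 2 = m + 1 by omega, show m + 3 - 1 = m + 2 by omega,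
    show m + 3 - 3 = m by omega, sub_mul, mul_sub, natSingle_mul_jordan_pow, zero_add,
    show 1 + m = m + 1 by omega, h₁, h₂, h₃, h₄]
  abel

section Generation

variable {n : ℕ}

lemma jordan_mem_pair : jordan n ∈ ({jordan n, matB n} : Set (Matrix (Fin n) (Fin n) ℂ)) :=
  Set.mem_insert _ _

lemma matB_mem_wordSpan0_one : matB n ∈ wordSpan0 n 1 {jordan n, matB n} :=
  mem_wordSpan0_of_mem (Set.mem_insert_of_mem _ rfl) le_rfl

lemma natSingle_last_zero_mem_wordSpan0 (hn : 3 ≤ n) :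
    natSingle n (n - 1) 0 ∈ wordSpan0 n (n - 1) {jordan n, matB n} := by
  have h := neg_mem <| mul_mem_wordSpan0
    (mul_pow_mem_wordSpan0 jordan_mem_pair matB_mem_wordSpan0_one (n - 3))
    (matB_mem_wordSpan0_one (n := n))
  rwa [matB_mul_jordan_pow_mul_matB hn, neg_neg, show 1 + (n - 3) + 1 = n - 1 by omega] at h

lemma natSingle_mem_wordSpan0_of_le (hn : 3 ≤ n) {i j : ℕ} (hji : j ≤ i) (hi : i < n) :
    natSingle n i j ∈ wordSpan0 n (2 * n - 2) {jordan n, matB n} := by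
  have h := mul_pow_mem_wordSpan0 jordan_mem_pair
    (pow_mul_mem_wordSpan0 jordan_mem_pair (natSingle_last_zero_mem_wordSpan0 hn) (n - 1 - i)) j
  rw [jordan_pow_mul_natSingle (i := i) (by omega) (by omega), natSingle_mul_jordan_pow,
    zero_add] at h
  exact wordSpan0_mono (by omega) h

lemma natSingle_sub_natSingle_mem_wordSpan0 {t d : ℕ} (ht : t + 2 ≤ n) (hd : d < n) :
    natSingle n t (t + d) - natSingle n (t + 1) (t + 1 + d) ∈
      wordSpan0 n (2 * n - 2) {jordan n, matB n} := by
  have h := mul_pow_mem_wordSpan0 jordan_mem_pair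
    (pow_mul_mem_wordSpan0 jordan_mem_pair (matB_mem_wordSpan0_one (n := n)) (n - 2 - t)) (t + d)
  rw [jordan_pow_mul_matB_mul_jordan_pow (i := t) (by omega),
    show t + d + 1 = t + 1 + d by omega] at h
  exact wordSpan0_mono (by omega) h

lemma natSingle_mem_wordSpan0_of_lt {i j : ℕ} (hij : i < j) (hj : j < n) :
    natSingle n i j ∈ wordSpan0 n (2 * n - 2) {jordan n, matB n} := by
  obtain ⟨d, rfl⟩ : ∃ d, j = i + d := ⟨j - i, by omega⟩
  have hd : 0 < d ∧ d < n := by omega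
  refine Nat.decreasingInduction
    (motive := fun t _ => natSingle n t (t + d) ∈ wordSpan0 n (2 * n - 2) {jordan n, matB n})
    (fun t ht ih => ?_) ?_ (show i ≤ n - 1 by omega)
  · have h := add_mem (natSingle_sub_natSingle_mem_wordSpan0 (t := t) (by omega) hd.2) ih
    rwa [sub_add_cancel] at h
  · rw [natSingle_of_le_right (show n ≤ n - 1 + d by omega)]
    exact zero_mem _

end Generation

/-- For `n ≥ 3` and `B_n = E_{n-1,1} - E_{n,2}`: the span of words in `{J_n, B_n}` of
length between `1` and `2n - 2` is all of `M_n(ℂ)` (so `l_0({J_n, B_n}) = 2n - 2`). -/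
theorem stmt_10 (n : ℕ) (hn : 3 ≤ n) :
    let B : Matrix (Fin n) (Fin n) ℂ :=
      Matrix.single ⟨n - 2, by omega⟩ ⟨0, by omega⟩ (1 : ℂ) -
        Matrix.single ⟨n - 1, by omega⟩ ⟨1, by omega⟩ (1 : ℂ)
    wordSpan0 n (2 * n - 2) {jordan n, B} = ⊤ := by
  intro B
  have hB : B = matB n := by simp only [B, matB, ← natSingle_eq_single]
  rw [hB, eq_top_iff, ← (Matrix.stdBasis ℂ (Fin n) (Fin n)).span_eq, Submodule.span_le]
  rintro _ ⟨⟨p, q⟩, rfl⟩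
  rw [SetLike.mem_coe, Matrix.stdBasis_eq_single, ← natSingle_eq_single]
  rcases le_or_gt (q : ℕ) p with hqp | hpq
  · exact natSingle_mem_wordSpan0_of_le hn hqp p.isLt
  · exact natSingle_mem_wordSpan0_of_lt hpq q.isLt
end

section
/- Let n and i be positive integers with i < n, let d be a common divisor of n and i, and identify M_n(ℂ) with the algebra of (n/d) × (n/d) block matrices with d × d blocks (i.e., index Fin n by pairs in Fin(n/d) × Fin d lexicographically). Under this identification, J_n^i equals the Kronecker product J_{n/d}^{i/d} ⊗ I_d and (J_nᵀ)^{n−i} equals (J_{n/d}ᵀ)^{(n−i)/d} ⊗ I_d, where I_d is the d × d identity matrix. -/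
open Matrix Kronecker

lemma jordan_pow_apply (n k : ℕ) (a b : Fin n) :
    (jordan n ^ k) a b = if (a : ℕ) + k = (b : ℕ) then 1 else 0 := by
  induction k generalizing b with
  | zero => simp [one_apply, Fin.ext_iff]
  | succ k ih =>
    rw [pow_succ, mul_apply]
    simp only [ih]
    simp only [jordan, of_apply, ite_zero_mul_ite_zero, mul_one]
    by_cases h : (a : ℕ) + k < n
    · rw [Finset.sum_eq_single ⟨(a : ℕ) + k, h⟩]
      · simp only [true_and]
        exact if_congr (by omega) rfl rfl
      · rintro c - hc
        exact if_neg fun hac => hc (Fin.ext hac.1.symm)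
      · simp
    · rw [if_neg (by omega)]
      exact Finset.sum_eq_zero fun c _ => if_neg fun hac => by omega

lemma Nat.mul_add_eq_mul_add_iff {a b q q' d : ℕ} (hq : q < d) (hq' : q' < d) :
    a * d + q = b * d + q' ↔ a = b ∧ q = q' := by
  have divMod : ∀ x r, r < d → (x * d + r) / d = x ∧ (x * d + r) % d = r :=
    fun x r hr => (Nat.div_mod_unique (by omega)).2 ⟨by ring, hr⟩
  refine ⟨fun h => ?_, by rintro ⟨rfl, rfl⟩; rfl⟩
  obtain ⟨hdiv, hmod⟩ := divMod a q hq
  obtain ⟨hdiv', hmod'⟩ := divMod b q' hq'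
  rw [h] at hdiv hmod
  exact ⟨hdiv.symm.trans hdiv', hmod.symm.trans hmod'⟩

/-- A shift by `k * d` positions of `Fin n` is a shift by `k` blocks of size `d`. -/
lemma jordan_pow_mul_submatrix {n m d : ℕ} (e : Fin m × Fin d → Fin n)
    (he : ∀ pq, (e pq : ℕ) = pq.1 * d + pq.2) (k : ℕ) :
    (jordan n ^ (k * d)).submatrix e e = (jordan m ^ k) ⊗ₖ (1 : Matrix (Fin d) (Fin d) ℂ) := by
  ext ⟨p, q⟩ ⟨p', q'⟩
  simp only [submatrix_apply, kroneckerMap_apply, jordan_pow_apply, one_apply, he,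
    ite_zero_mul_ite_zero, mul_one]
  refine if_congr ?_ rfl rfl
  rw [add_right_comm, ← add_mul, Nat.mul_add_eq_mul_add_iff q.isLt q'.isLt, Fin.ext_iff]

lemma jordan_transpose_pow_mul_submatrix {n m d : ℕ} (e : Fin m × Fin d → Fin n)
    (he : ∀ pq, (e pq : ℕ) = pq.1 * d + pq.2) (k : ℕ) :
    ((jordan n)ᵀ ^ (k * d)).submatrix e e =
      ((jordan m)ᵀ ^ k) ⊗ₖ (1 : Matrix (Fin d) (Fin d) ℂ) := by
  rw [← transpose_pow, ← transpose_submatrix, jordan_pow_mul_submatrix e he, ← transpose_pow,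
    ← transpose_one, kroneckerMap_transpose, transpose_one]

/-- For `0 < i < n` and a common divisor `d` of `n` and `i`, under the lexicographic
identification of `Fin n` with `Fin (n/d) × Fin d`, the matrix `J_n^i` equals the
Kronecker product `J_{n/d}^{i/d} ⊗ I_d` and `(J_nᵀ)^{n-i}` equals
`(J_{n/d}ᵀ)^{(n-i)/d} ⊗ I_d`. -/
theorem stmt_13 (n i : ℕ) (d : ℕ)
    (hdn : d ∣ n) (hdi : d ∣ i) :
    let e : Fin (n / d) × Fin d → Fin n := fun pq =>
      ⟨(pq.1 : ℕ) * d + (pq.2 : ℕ), by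
        have h1 : (pq.1 : ℕ) < n / d := pq.1.isLt
        have h2 : (pq.2 : ℕ) < d := pq.2.isLt
        calc (pq.1 : ℕ) * d + (pq.2 : ℕ) < ((pq.1 : ℕ) + 1) * d := by
              rw [Nat.add_mul, Nat.one_mul]; omega
          _ ≤ (n / d) * d := Nat.mul_le_mul (Nat.succ_le_of_lt h1) (le_refl d)
          _ = n := Nat.div_mul_cancel hdn⟩
    (jordan n ^ i).submatrix e e =
        (jordan (n / d) ^ (i / d)) ⊗ₖ (1 : Matrix (Fin d) (Fin d) ℂ) ∧
      ((jordan n)ᵀ ^ (n - i)).submatrix e e =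
        ((jordan (n / d))ᵀ ^ ((n - i) / d)) ⊗ₖ (1 : Matrix (Fin d) (Fin d) ℂ) := by
  intro e
  have he : ∀ pq, (e pq : ℕ) = pq.1 * d + pq.2 := fun _ => rfl
  constructor
  · rw [← jordan_pow_mul_submatrix e he, Nat.div_mul_cancel hdi]
  · rw [← jordan_transpose_pow_mul_submatrix e he, Nat.div_mul_cancel (Nat.dvd_sub hdn hdi)]
end
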